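/- Let Z ∈ ℤ^V with Z ≥ 0 and let l′ ∈ ℚ^V. The set 𝒟 = {D ∈ ℤ^V : 0 ≤ D ≤ Z and B(l′ − D, e_v) ≥ 0 for every v ∈ V with Z_v − D_v > 0} contains Z, and it has a least element: there exists D₀ ∈ 𝒟 with D₀ ≤ D for every D ∈ 𝒟. -/

import Mathlib

/-! The set `𝒟` is finite (it lies in the box `[0, Z]`) and contains `Z`, so it has a minimal
element; it is also closed under coordinatewise minimum, so that minimal element is least.
Closure under `⊓` is the point: if `D ⊓ D'` agrees with `D` at `v`, then
`(l′ − D ⊓ D') − (l′ − D) = D − D ⊓ D'` is nonnegative and vanishes at `v`, hence pairs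
nonnegatively with `e_v` because `B` is nonnegative off the diagonal. -/

/-- Cast an integer-valued lattice point into the rational vector space `V → ℚ`. -/
def toQ {V : Type*} (l : V → ℤ) : V → ℚ := fun v => (l v : ℚ)

/-- Membership in the set `𝒟`: `0 ≤ D ≤ Z` and `B(l′ − D, e_v) ≥ 0` for every
vertex `v` in the support of `Z − D`. -/
def LauferEndpoint {V : Type*} [Fintype V] [DecidableEq V]
    (B : LinearMap.BilinForm ℚ (V → ℚ)) (l' : V → ℚ) (Z D : V → ℤ) : Prop :=
  0 ≤ D ∧ D ≤ Z ∧ ∀ v : V, 0 < Z v - D v → 0 ≤ B (l' - toQ D) (Pi.single v 1)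

lemma InfClosed.exists_isLeast_of_finite {α : Type*} [SemilatticeInf α] {s : Set α}
    (hs : InfClosed s) (hfin : s.Finite) (hne : s.Nonempty) : ∃ a, IsLeast s a := by
  obtain ⟨a, ha⟩ := hfin.exists_minimal hne
  exact ⟨a, hs.codirectedOn.minimal_iff_isLeast.1 ha⟩

lemma LinearMap.BilinForm.apply_single_nonneg_of_nonneg_of_apply_eq_zero
    {R V : Type*} [CommRing R] [PartialOrder R] [IsOrderedRing R] [Fintype V] [DecidableEq V]
    {B : LinearMap.BilinForm R (V → R)}
    (hoff : ∀ v w : V, v ≠ w → 0 ≤ B (Pi.single v 1) (Pi.single w 1))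
    {x : V → R} (hx : 0 ≤ x) {v : V} (hxv : x v = 0) : 0 ≤ B x (Pi.single v 1) := by
  have hsum : x = ∑ w, x w • (Pi.single w 1 : V → R) := by
    simp only [← Pi.single_smul', smul_eq_mul, mul_one, Finset.univ_sum_single]
  rw [hsum, map_sum, LinearMap.sum_apply]
  refine Finset.sum_nonneg fun w _ => ?_
  rw [map_smul, LinearMap.smul_apply, smul_eq_mul]
  rcases eq_or_ne w v with rfl | hwv
  · simp [hxv]
  · exact mul_nonneg (hx w) (hoff w v hwv)

section LauferEndpoint

variable {V : Type*} [Fintype V] [DecidableEq V] {B : LinearMap.BilinForm ℚ (V → ℚ)}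

lemma bilin_sub_toQ_single_le_of_le_of_eq
    (hoff : ∀ v w : V, v ≠ w → 0 ≤ B (Pi.single v 1) (Pi.single w 1))
    (l' : V → ℚ) {D E : V → ℤ} (hED : E ≤ D) {v : V} (hv : E v = D v) :
    B (l' - toQ D) (Pi.single v 1) ≤ B (l' - toQ E) (Pi.single v 1) := by
  have hdiff : 0 ≤ B (toQ D - toQ E) (Pi.single v 1) := by
    refine B.apply_single_nonneg_of_nonneg_of_apply_eq_zero hoff (fun w => ?_) ?_
    · simpa [toQ] using hED w
    · simp [toQ, hv]
  calc B (l' - toQ D) (Pi.single v 1)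
      ≤ B (l' - toQ D) (Pi.single v 1) + B (toQ D - toQ E) (Pi.single v 1) :=
        le_add_of_nonneg_right hdiff
    _ = B (l' - toQ E) (Pi.single v 1) := by
        rw [← LinearMap.add_apply, ← map_add, sub_add_sub_cancel]

lemma lauferEndpoint_self (B : LinearMap.BilinForm ℚ (V → ℚ)) (l' : V → ℚ) {Z : V → ℤ}
    (hZ : 0 ≤ Z) : LauferEndpoint B l' Z Z :=
  ⟨hZ, le_rfl, fun v hv => absurd hv (by simp)⟩

lemma LauferEndpoint.inf
    (hoff : ∀ v w : V, v ≠ w → 0 ≤ B (Pi.single v 1) (Pi.single w 1))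
    {l' : V → ℚ} {Z D D' : V → ℤ}
    (hD : LauferEndpoint B l' Z D) (hD' : LauferEndpoint B l' Z D') :
    LauferEndpoint B l' Z (D ⊓ D') := by
  refine ⟨le_inf hD.1 hD'.1, inf_le_left.trans hD.2.1, fun v hv => ?_⟩
  rcases min_cases (D v) (D' v) with ⟨hmin, -⟩ | ⟨hmin, -⟩
  · exact (hD.2.2 v (by simp_all)).trans
      (bilin_sub_toQ_single_le_of_le_of_eq hoff l' inf_le_left hmin)
  · exact (hD'.2.2 v (by simp_all)).trans
      (bilin_sub_toQ_single_le_of_le_of_eq hoff l' inf_le_right hmin)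

lemma infClosed_setOf_lauferEndpoint
    (hoff : ∀ v w : V, v ≠ w → 0 ≤ B (Pi.single v 1) (Pi.single w 1)) (l' : V → ℚ) (Z : V → ℤ) :
    InfClosed {D | LauferEndpoint B l' Z D} :=
  fun _ hD _ hD' => hD.inf hoff hD'

lemma finite_setOf_lauferEndpoint (B : LinearMap.BilinForm ℚ (V → ℚ)) (l' : V → ℚ)
    (Z : V → ℤ) : {D | LauferEndpoint B l' Z D}.Finite :=
  (Set.finite_Icc 0 Z).subset fun _ hD => ⟨hD.1, hD.2.1⟩

end LauferEndpoint

theorem laufer_endpoint_least_element_general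
    {V : Type*} [Fintype V] [DecidableEq V]
    (B : LinearMap.BilinForm ℚ (V → ℚ))
    (hoff : ∀ v w : V, v ≠ w → 0 ≤ B (Pi.single v 1) (Pi.single w 1))
    (Z : V → ℤ) (hZ : 0 ≤ Z) (l' : V → ℚ) :
    LauferEndpoint B l' Z Z ∧
    ∃ D₀ : V → ℤ, LauferEndpoint B l' Z D₀ ∧
      ∀ D : V → ℤ, LauferEndpoint B l' Z D → D₀ ≤ D := by
  have hZZ := lauferEndpoint_self B l' hZ
  obtain ⟨D₀, hD₀, hleast⟩ := (infClosed_setOf_lauferEndpoint hoff l' Z).exists_isLeast_of_finite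
    (finite_setOf_lauferEndpoint B l' Z) ⟨Z, hZZ⟩
  exact ⟨hZZ, D₀, hD₀, fun _ hD => hleast hD⟩

/-- The set `𝒟` contains `Z` and has a least element. -/
theorem laufer_endpoint_least_element
    {V : Type*} [Fintype V] [Nonempty V] [DecidableEq V]
    (B : LinearMap.BilinForm ℚ (V → ℚ))
    (hsymm : ∀ x y : V → ℚ, B x y = B y x)
    (hoff : ∀ v w : V, v ≠ w → 0 ≤ B (Pi.single v 1) (Pi.single w 1))
    (Z : V → ℤ) (hZ : 0 ≤ Z) (l' : V → ℚ) :
    LauferEndpoint B l' Z Z ∧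
    ∃ D₀ : V → ℤ, LauferEndpoint B l' Z D₀ ∧
      ∀ D : V → ℤ, LauferEndpoint B l' Z D → D₀ ≤ D :=
  laufer_endpoint_least_element_general B hoff Z hZ l'
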